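/- Let X ⊆ T be finite with |V_k(X)| = N, where V_k(X) is the set obtained from X by at most k steps of taking immediate pair-components, and let W_k(X) = {Sᵐ(w) : m ∈ ℤ, w ∈ V_k(X)}. If w₀ ≺ w₁ ≺ … ≺ w_ℓ is a strictly ≺-increasing chain in W_k(X), then ℓ < N. -/
import Mathlib


/-- Finite full binary trees over generators d(n,m), n ∈ ℕ, m ∈ ℤ. -/
inductive Tree' : Type
  | d : ℕ → ℤ → Tree'
  | pair : Tree' → Tree' → Tree'
  deriving DecidableEq

/-- The tree successor: shifts the ℤ-index of the rightmost leaf up by one. -/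
def Tree'.S : Tree' → Tree'
  | .d n m => .d n (m + 1)
  | .pair u v => .pair u v.S

/-- The tree predecessor: shifts the ℤ-index of the rightmost leaf down by one. -/
def Tree'.P : Tree' → Tree'
  | .d n m => .d n (m - 1)
  | .pair u v => .pair u v.P

/-- Sᵐ for m ∈ ℤ. -/
def Sit : ℤ → Tree' → Tree'
  | Int.ofNat n, t => Tree'.S^[n] t
  | Int.negSucc n, t => Tree'.P^[n + 1] t

/-- The immediate components of a tree. -/
def comps : Tree' → Finset Tree'
  | .d _ _ => ∅
  | .pair u v => {u, v}

/-- V_k(X): at most k steps of taking immediate pair-components, starting from X. -/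
def Vk : ℕ → Finset Tree' → Finset Tree'
  | 0, X => X
  | (k + 1), X => Vk k X ∪ (Vk k X).biUnion comps

/-- W_k(X) = { Sᵐ(w) : m ∈ ℤ, w ∈ V_k(X) }. -/
def Wk (k : ℕ) (X : Finset Tree') : Set Tree' :=
  {t | ∃ (m : ℤ) (w : Tree'), w ∈ Vk k X ∧ t = Sit m w}

/-- `Subt u w`: u is in the subtree-closure of w. -/
inductive Subt : Tree' → Tree' → Prop
  | refl (t : Tree') : Subt t t
  | left {u w v : Tree'} : Subt u w → Subt u (.pair w v)
  | right {u w v : Tree'} : Subt u v → Subt u (.pair w v)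

/-- v ≺ w iff some ℤ-shift Sʳ(v) lies in V({w}) ∖ {w}. -/
def prec (v w : Tree') : Prop := ∃ r : ℤ, Subt (Sit r v) w ∧ Sit r v ≠ w


def tsize : Tree' → ℕ
  | .d _ _ => 1
  | .pair u v => tsize u + tsize v + 1

lemma tsize_S (t : Tree') : tsize t.S = tsize t := by
  induction t with
  | d n m => rfl
  | pair u v ihu ihv => simp [Tree'.S, tsize, ihv]

lemma tsize_P (t : Tree') : tsize t.P = tsize t := by
  induction t with
  | d n m => rfl
  | pair u v ihu ihv => simp [Tree'.P, tsize, ihv]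

lemma tsize_Sit (m : ℤ) (t : Tree') : tsize (Sit m t) = tsize t := by
  cases m with
  | ofNat n =>
    show tsize (Tree'.S^[n] t) = tsize t
    induction n with
    | zero => rfl
    | succ n ih => rw [Function.iterate_succ_apply', tsize_S, ih]
  | negSucc n =>
    show tsize (Tree'.P^[n+1] t) = tsize t
    induction (n+1) with
    | zero => rfl
    | succ n ih => rw [Function.iterate_succ_apply', tsize_P, ih]

lemma subt_size {x t : Tree'} (h : Subt x t) : x = t ∨ tsize x < tsize t := by
  induction h with
  | refl => exact Or.inl rfl
  | left h ih =>
    right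
    rcases ih with rfl | h' <;> simp [tsize] <;> omega
  | right h ih =>
    right
    rcases ih with rfl | h' <;> simp [tsize] <;> omega

lemma prec_size {v t : Tree'} (h : prec v t) : tsize v < tsize t := by
  obtain ⟨r, hs, hne⟩ := h
  rcases subt_size hs with h | h
  · exact absurd h hne
  · rwa [tsize_Sit] at h

/-- Any strictly ≺-increasing chain w₀ ≺ w₁ ≺ … ≺ w_ℓ inside W_k(X) has length
ℓ < N, where N = |V_k(X)|. -/
theorem chain_length_lt_card (k : ℕ) (X : Finset Tree') (N : ℕ)
    (hN : (Vk k X).card = N) (ℓ : ℕ) (w : Fin (ℓ + 1) → Tree')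
    (hmem : ∀ i, w i ∈ Wk k X)
    (hchain : ∀ i : Fin ℓ, prec (w i.castSucc) (w i.succ)) :
    ℓ < N := by
  have hsm : StrictMono (fun i => tsize (w i)) := by
    rw [Fin.strictMono_iff_lt_succ]
    intro i
    exact prec_size (hchain i)
  have hmem' : ∀ i, tsize (w i) ∈ (Vk k X).image tsize := by
    intro i
    obtain ⟨m, b, hb, hw⟩ := hmem i
    rw [hw, tsize_Sit]
    exact Finset.mem_image_of_mem _ hb
  have hcard : (Finset.univ : Finset (Fin (ℓ + 1))).card ≤ ((Vk k X).image tsize).card :=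
    Finset.card_le_card_of_injOn (fun i => tsize (w i)) (fun i _ => hmem' i)
      (hsm.injective.injOn)
  simp [Finset.card_univ] at hcard
  have := Finset.card_image_le (s := Vk k X) (f := tsize)
  omega
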